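/- For every derivation D of P_n and every integer i ≥ 1, J(D^{[i]}) = Σ_{j=0}^{i-2} J(D)^j · (D^{[i-1-j]}(J(D))) + J(D)^i, where D^{[0]} = D is interpreted consistently with D^{[1]} = D (so for i = 1 the sum is empty and the formula reads J(D^{[1]}) = J(D)), and D^{[m]}(J(D)) denotes entrywise application of the derivation D^{[m]} to the matrix J(D). -/

import Mathlib

open MvPolynomial

/-- `Pn k n` is the polynomial algebra `k[x₁,…,xₙ]`. -/
abbrev Pn (k : Type*) [CommRing k] (n : ℕ) := MvPolynomial (Fin n) k

/-- `Der k n` is the space of `k`-linear derivations of `Pn k n`. -/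
abbrev Der (k : Type*) [CommRing k] (n : ℕ) := Derivation k (Pn k n) (Pn k n)

variable {k : Type*} [Field k] [CharZero k] {n : ℕ}

/-- The left-symmetric product of derivations: `(D · E)(xᵢ) = D (E xᵢ)`. -/
noncomputable def lsMul (D E : Der k n) : Der k n :=
  MvPolynomial.mkDerivation k (fun i => D (E (MvPolynomial.X i)))

/-- The Jacobian matrix of a derivation: `(J D)ᵢⱼ = ∂(D xᵢ)/∂xⱼ`. -/
noncomputable def jac (D : Der k n) : Matrix (Fin n) (Fin n) (Pn k n) :=
  Matrix.of fun i j => MvPolynomial.pderiv j (D (MvPolynomial.X i))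

/-- The divergence of a derivation. -/
noncomputable def divg (D : Der k n) : Pn k n :=
  ∑ i, MvPolynomial.pderiv i (D (MvPolynomial.X i))

/-- Right powers: `rpow D 1 = D`, `rpow D (r+1) = (rpow D r) · D` (for `r ≥ 1`). -/
noncomputable def rpow (D : Der k n) : ℕ → Der k n
  | 0 => D
  | 1 => D
  | (r+2) => lsMul (rpow D (r+1)) D

/-- Left powers: `lpow D 1 = D`, `lpow D (r+1) = D · (lpow D r)` (for `r ≥ 1`). -/
noncomputable def lpow (D : Der k n) : ℕ → Der k n
  | 0 => D
  | 1 => D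
  | (r+2) => lsMul D (lpow D (r+1))

/-- Right multiplication operator `R_D : E ↦ E · D`, as a `k`-linear endomorphism. -/
noncomputable def rmulOp (D : Der k n) : Der k n →ₗ[k] Der k n where
  toFun E := lsMul E D
  map_add' E₁ E₂ := by
    show (MvPolynomial.mkDerivationEquiv k) _ =
      (MvPolynomial.mkDerivationEquiv k) _ + (MvPolynomial.mkDerivationEquiv k) _
    rw [← map_add]
    exact congrArg _ (funext fun i => by simp)
  map_smul' c E := by
    show (MvPolynomial.mkDerivationEquiv k) _ = c • (MvPolynomial.mkDerivationEquiv k) _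
    rw [← map_smul]
    exact congrArg _ (funext fun i => by simp)

/-- Left multiplication operator `L_D : E ↦ D · E`, as a `k`-linear endomorphism. -/
noncomputable def lmulOp (D : Der k n) : Der k n →ₗ[k] Der k n where
  toFun E := lsMul D E
  map_add' E₁ E₂ := by
    show (MvPolynomial.mkDerivationEquiv k) _ =
      (MvPolynomial.mkDerivationEquiv k) _ + (MvPolynomial.mkDerivationEquiv k) _
    rw [← map_add]
    exact congrArg _ (funext fun i => by simp)
  map_smul' c E := by
    show (MvPolynomial.mkDerivationEquiv k) _ = c • (MvPolynomial.mkDerivationEquiv k) _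
    rw [← map_smul]
    exact congrArg _ (funext fun i => by simp)

/-- `Zc F i a` is the coefficient of `t^i` in the image of `a` under `xⱼ ↦ xⱼ + t·fⱼ`. -/
noncomputable def Zc (F : Fin n → Pn k n) (i : ℕ) (a : Pn k n) : Pn k n :=
  (MvPolynomial.aeval
    (fun j => Polynomial.C (MvPolynomial.X j) + Polynomial.C (F j) * Polynomial.X :
      Fin n → Polynomial (Pn k n)) a).coeff i

/-- `PsiOp F m a = Σ (−1)^{k−1} r_k Z_{r₁}(Z_{r₂}(⋯ Z_{r_k}(a)⋯))`, summed over
compositions `(r₁,…,r_k)` of `m`. -/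
noncomputable def PsiOp (F : Fin n → Pn k n) (m : ℕ) (a : Pn k n) : Pn k n :=
  ∑ c : Composition m,
    (-1 : Pn k n) ^ (c.length - 1) * ((c.blocks.getLastD 0 : ℕ) : Pn k n) *
      (c.blocks.foldr (fun r b => Zc F r b) a)

/-! Differentiating `(E · D)(xᵢ) = E (D xᵢ)` by the chain rule gives
`J(E · D) = E(J D) + J(D) J(E)`; unwinding `D^{[m+2]} = D^{[m+1]} · D` with this identity yields
the formula. -/

theorem Derivation.finset_sum_apply {R A M ι : Type*} [CommSemiring R] [CommSemiring A]
    [AddCommMonoid M] [Algebra R A] [Module A M] [Module R M] (s : Finset ι)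
    (f : ι → Derivation R A M) (a : A) : (∑ i ∈ s, f i) a = ∑ i ∈ s, f i a :=
  congrFun (map_sum Derivation.coeFnAddMonoidHom f s) a |>.trans (Finset.sum_apply a s _)

namespace MvPolynomial

variable {R σ : Type*} [Fintype σ]

section CommSemiring

variable [CommSemiring R]

theorem derivation_eq_sum_smul_pderiv (D : Derivation R (MvPolynomial σ R) (MvPolynomial σ R)) :
    D = ∑ i, D (X i) • pderiv i := by
  classical
  refine derivation_ext fun j => ?_
  simp [Derivation.finset_sum_apply, pderiv_X, Pi.single_apply]

theorem derivation_apply_eq_sum_pderiv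
    (D : Derivation R (MvPolynomial σ R) (MvPolynomial σ R)) (p : MvPolynomial σ R) :
    D p = ∑ i, pderiv i p * D (X i) := by
  conv_lhs => rw [derivation_eq_sum_smul_pderiv D]
  simp [Derivation.finset_sum_apply, mul_comm]

end CommSemiring

variable [CommRing R]

/-- The commutator `⁅∂_b, E⁆` is the derivation sending `X c` to
`∂_b (E (X c))`, because `E` kills the constant `∂_b (X c)`. -/
theorem pderiv_derivation_apply (E : Derivation R (MvPolynomial σ R) (MvPolynomial σ R))
    (b : σ) (p : MvPolynomial σ R) :
    pderiv b (E p) = E (pderiv b p) + ∑ c, pderiv c p * pderiv b (E (X c)) := by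
  classical
  have hcomm := derivation_apply_eq_sum_pderiv ⁅(pderiv b : Derivation R _ _), E⁆ p
  have hconst (c : σ) : E (pderiv b (X c)) = 0 := by
    rw [pderiv_X, Pi.single_apply]
    split_ifs <;> simp
  simp only [Derivation.commutator_apply, hconst, sub_zero] at hcomm
  rw [← hcomm, add_sub_cancel]

end MvPolynomial

section

variable {K : Type*} [Field K] {N : ℕ}

lemma lsMul_apply_X (E D : Der K N) (a : Fin N) : lsMul E D (X a) = E (D (X a)) :=
  mkDerivation_X _ _ _

lemma jac_lsMul (E D : Der K N) : jac (lsMul E D) = (jac D).map ⇑E + jac D * jac E := by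
  ext a b
  rw [jac, Matrix.of_apply, lsMul_apply_X, pderiv_derivation_apply]
  rfl

lemma jac_rpow_succ (D : Der K N) (m : ℕ) :
    jac (rpow D (m + 1)) =
      (∑ j ∈ Finset.range m, jac D ^ j * (jac D).map ⇑(rpow D (m - j))) + jac D ^ (m + 1) := by
  induction m with
  | zero => simp [rpow]
  | succ m ih =>
    rw [show rpow D (m + 2) = lsMul (rpow D (m + 1)) D from rfl, jac_lsMul, ih, mul_add,
      Finset.mul_sum, Finset.sum_range_succ']
    simp only [← mul_assoc, ← pow_succ', pow_zero, one_mul, Nat.sub_zero, Nat.succ_sub_succ]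
    abel

end

theorem jac_rpow_general (D : Der k n) (i : ℕ) (hi : 1 ≤ i) :
    jac (rpow D i) =
      (∑ j ∈ Finset.range (i - 1), (jac D) ^ j * (jac D).map ⇑(rpow D (i - 1 - j))) +
        (jac D) ^ i := by
  obtain ⟨m, rfl⟩ := Nat.exists_eq_add_of_le' hi
  simpa using jac_rpow_succ D m

/-- `J(D^{[i]}) = Σ_{j=0}^{i-2} J(D)^j · (D^{[i-1-j]}(J(D))) + J(D)^i`
for every `i ≥ 1`. -/
theorem jac_rpow (hn : 1 ≤ n) (D : Der k n) (i : ℕ) (hi : 1 ≤ i) :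
    jac (rpow D i) =
      (∑ j ∈ Finset.range (i - 1), (jac D) ^ j * (jac D).map ⇑(rpow D (i - 1 - j))) +
        (jac D) ^ i :=
  jac_rpow_general D i hi
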